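/- (Lemma 5.4.) Under the setup of Algorithm 3 with true processing-time matrix t, predicted matrix t_hat, parameter gamma in [1, m], and prediction error eta >= 1 satisfying t(i,j) <= eta * t_hat(i,j) and t_hat(i,j) <= eta * t(i,j) for all i, j, the allocation a produced by Algorithm 3 under truthful bidding satisfies F(a, t) <= (1 + 2*gamma) * eta^2 * MS(t). -/

import Mathlib

/-- The makespan of allocation `a` (jobs to machines) for the
processing-time matrix `t`: the largest total load of a machine. -/
noncomputable def mkspan {m n : ℕ} (a : Fin n → Fin m) (t : Fin m → Fin n → ℝ) : ℝ :=
  sSup {x : ℝ | ∃ i : Fin m, x = ∑ j : Fin n, if a j = i then t i j else 0}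

/-- The minimum makespan of the scheduling instance `t` over all allocations. -/
noncomputable def optMS {m n : ℕ} (t : Fin m → Fin n → ℝ) : ℝ :=
  sInf {x : ℝ | ∃ a : Fin n → Fin m, x = mkspan a t}

/-!
Write `c = γ/m` and `B` for the optimal makespan of the rounded matrix `t̄`. Each job `j`
either lands on its machine `ā(j)` at true cost at most `η·t̄(ā(j),j)`, or costs at most
`c·η·t̄(ā(j),j)` wherever it goes: a greedy job is worth `c·t̄` on its fastest predicted
machine, and a job leaving the machine of weight `c²` gains at least a factor `c`.
The first kind loads a machine `i` by at most `η` times its `ā`-load, hence by `η·B`; the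
second kind costs in total at most `c·η·∑ⱼ t̄(ā(j),j) ≤ c·η·m·B = γ·η·B`. Finally
`t̄ ≤ t̂ ≤ η·t` gives `B ≤ η·MS(t)`.
-/

section Makespan

variable {m n : ℕ}

def machineLoad (b : Fin n → Fin m) (s : Fin m → Fin n → ℝ) (i : Fin m) : ℝ :=
  ∑ j, if b j = i then s i j else 0

theorem mkspan_eq_sSup_range (b : Fin n → Fin m) (s : Fin m → Fin n → ℝ) :
    mkspan b s = sSup (Set.range (machineLoad b s)) := by
  simp only [mkspan, machineLoad, Set.range, eq_comm]

theorem machineLoad_le_mkspan (b : Fin n → Fin m) (s : Fin m → Fin n → ℝ) (i : Fin m) :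
    machineLoad b s i ≤ mkspan b s := by
  rw [mkspan_eq_sSup_range]
  exact le_csSup (Set.finite_range _).bddAbove ⟨i, rfl⟩

theorem mkspan_le_of_forall_machineLoad_le [Nonempty (Fin m)] {b : Fin n → Fin m}
    {s : Fin m → Fin n → ℝ} {C : ℝ} (h : ∀ i, machineLoad b s i ≤ C) : mkspan b s ≤ C := by
  rw [mkspan_eq_sSup_range]
  exact csSup_le (Set.range_nonempty _) (Set.forall_mem_range.mpr h)

theorem machineLoad_nonneg {s : Fin m → Fin n → ℝ} (hs : ∀ i j, 0 ≤ s i j)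
    (b : Fin n → Fin m) (i : Fin m) : 0 ≤ machineLoad b s i :=
  Finset.sum_nonneg fun j _ => by split_ifs <;> simp [hs]

theorem mkspan_nonneg [Nonempty (Fin m)] {s : Fin m → Fin n → ℝ} (hs : ∀ i j, 0 ≤ s i j)
    (b : Fin n → Fin m) : 0 ≤ mkspan b s :=
  (machineLoad_nonneg hs b (Classical.arbitrary _)).trans (machineLoad_le_mkspan b s _)

theorem sum_machineLoad (b : Fin n → Fin m) (s : Fin m → Fin n → ℝ) :
    ∑ i, machineLoad b s i = ∑ j, s (b j) j := by
  simp only [machineLoad]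
  rw [Finset.sum_comm]
  simp

theorem sum_le_mul_mkspan (b : Fin n → Fin m) (s : Fin m → Fin n → ℝ) :
    ∑ j, s (b j) j ≤ m * mkspan b s := by
  rw [← sum_machineLoad]
  calc ∑ i, machineLoad b s i ≤ ∑ _i : Fin m, mkspan b s :=
        Finset.sum_le_sum fun i _ => machineLoad_le_mkspan b s i
    _ = m * mkspan b s := by simp

theorem mkspan_le_mul_mkspan [Nonempty (Fin m)] {s s' : Fin m → Fin n → ℝ} {c : ℝ}
    (hc : 0 ≤ c) (h : ∀ i j, s i j ≤ c * s' i j) (b : Fin n → Fin m) :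
    mkspan b s ≤ c * mkspan b s' := by
  refine mkspan_le_of_forall_machineLoad_le fun i => ?_
  calc machineLoad b s i ≤ c * machineLoad b s' i := by
        rw [machineLoad, machineLoad, Finset.mul_sum]
        exact Finset.sum_le_sum fun j _ => by split_ifs <;> simp [h]
    _ ≤ c * mkspan b s' := mul_le_mul_of_nonneg_left (machineLoad_le_mkspan b s' i) hc

theorem exists_optMS_eq_mkspan [Nonempty (Fin m)] (t : Fin m → Fin n → ℝ) :
    ∃ a : Fin n → Fin m, optMS t = mkspan a t := by
  have hne : {x | ∃ a : Fin n → Fin m, x = mkspan a t}.Nonempty :=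
    ⟨_, Classical.arbitrary _, rfl⟩
  have hfin : {x | ∃ a : Fin n → Fin m, x = mkspan a t}.Finite :=
    (Set.finite_range fun a : Fin n → Fin m => mkspan a t).subset fun _ ⟨a, h⟩ => ⟨a, h.symm⟩
  exact hne.csInf_mem hfin

theorem mkspan_le_mul_optMS_of_isMin [Nonempty (Fin m)] {abar : Fin n → Fin m}
    {s t : Fin m → Fin n → ℝ} {c : ℝ} (habar : ∀ a', mkspan abar s ≤ mkspan a' s)
    (hc : 0 ≤ c) (h : ∀ i j, s i j ≤ c * t i j) : mkspan abar s ≤ c * optMS t := by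
  obtain ⟨a, ha⟩ := exists_optMS_eq_mkspan t
  rw [ha]
  exact (habar a).trans (mkspan_le_mul_mkspan hc h a)

theorem machineLoad_le_of_job_bounds {a abar : Fin n → Fin m} {t s : Fin m → Fin n → ℝ}
    {δ : Fin n → ℝ} {η : ℝ} (hη : 0 ≤ η) (hs : ∀ i j, 0 ≤ s i j) (hδ : ∀ j, 0 ≤ δ j)
    (hjob : ∀ j, t (a j) j ≤ δ j ∨ (a j = abar j ∧ t (a j) j ≤ η * s (abar j) j))
    (i : Fin m) : machineLoad a t i ≤ η * machineLoad abar s i + ∑ j, δ j := by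
  rw [machineLoad, machineLoad, Finset.mul_sum, ← Finset.sum_add_distrib]
  refine Finset.sum_le_sum fun j _ => ?_
  have hηs : 0 ≤ η * (if abar j = i then s i j else 0) :=
    mul_nonneg hη (by split_ifs <;> simp [hs])
  by_cases hai : a j = i
  · subst hai
    rcases hjob j with hfar | ⟨hstay, hle⟩
    · simp only [if_true]
      linarith
    · simpa [← hstay] using hle.trans (le_add_of_nonneg_right (hδ j))
  · simp only [hai, if_false]
    linarith [hδ j]

theorem mkspan_le_of_job_bounds [Nonempty (Fin m)] {a abar : Fin n → Fin m}
    {t s : Fin m → Fin n → ℝ} {c η : ℝ} (hc : 0 ≤ c) (hη : 0 ≤ η) (hs : ∀ i j, 0 ≤ s i j)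
    (hjob : ∀ j, t (a j) j ≤ c * η * s (abar j) j ∨
      (a j = abar j ∧ t (a j) j ≤ η * s (abar j) j)) :
    mkspan a t ≤ (1 + c * m) * η * mkspan abar s := by
  refine mkspan_le_of_forall_machineLoad_le fun i => ?_
  have hsum : ∑ j, c * η * s (abar j) j ≤ c * η * (m * mkspan abar s) := by
    rw [← Finset.mul_sum]
    exact mul_le_mul_of_nonneg_left (sum_le_mul_mkspan abar s) (mul_nonneg hc hη)
  have hload : η * machineLoad abar s i ≤ η * mkspan abar s :=
    mul_le_mul_of_nonneg_left (machineLoad_le_mkspan abar s i) hη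
  have := machineLoad_le_of_job_bounds hη hs (fun j => mul_nonneg (mul_nonneg hc hη) (hs _ j))
    hjob i
  linarith

end Makespan

section Job

variable {ι : Type*} {t that w : ι → ℝ} {c η : ℝ} {k : ι}

theorem greedy_job_time_le {l : ι} (hc1 : c ≤ 1) (hwl : w l = c)
    (hw : ∀ i, i ≠ l → w i = 1) (hk : ∀ i, w k * t k ≤ w i * t i) (ht : 0 ≤ t l)
    (herr : t l ≤ η * that l) : t k ≤ η * that l := by
  by_cases hkl : k = l
  · exact hkl ▸ herr
  · have := hk l
    rw [hw k hkl, hwl, one_mul] at this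
    nlinarith

theorem nongreedy_job_time_le {kbar : ι} (hc0 : 0 ≤ c) (hc1 : c ≤ 1) (hwk : w kbar = c ^ 2)
    (hw : ∀ i, i ≠ kbar → w i = 1) (hk : ∀ i, w k * t k ≤ w i * t i) (ht : 0 ≤ t kbar)
    (hne : k ≠ kbar) : t k ≤ c * t kbar := by
  have := hk kbar
  rw [hw k hne, hwk, one_mul] at this
  nlinarith [mul_nonneg (mul_nonneg hc0 (sub_nonneg.2 hc1)) ht]

theorem job_time_le_or {tbar : ι → ℝ} {kbar : ι} (hc0 : 0 < c) (hc1 : c ≤ 1)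
    (ht : ∀ i, 0 ≤ t i) (herr : ∀ i, t i ≤ η * that i)
    (htbar : tbar kbar = min (that kbar) (c⁻¹ * ⨅ i, that i))
    (hgreedy : tbar kbar < that kbar →
      ∃ l, (∀ i, that l ≤ that i) ∧ w l = c ∧ ∀ i, i ≠ l → w i = 1)
    (hnon : ¬ tbar kbar < that kbar → w kbar = c ^ 2 ∧ ∀ i, i ≠ kbar → w i = 1)
    (hk : ∀ i, w k * t k ≤ w i * t i) :
    t k ≤ c * η * tbar kbar ∨ (k = kbar ∧ t k ≤ η * tbar kbar) := by
  by_cases hg : tbar kbar < that kbar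
  · obtain ⟨l, hl, hwl, hw⟩ := hgreedy hg
    have : Nonempty ι := ⟨l⟩
    have hleast : IsLeast (Set.range that) (that l) := ⟨⟨l, rfl⟩, Set.forall_mem_range.2 hl⟩
    rw [hleast.isGLB.ciInf_eq] at htbar
    have hround : tbar kbar = c⁻¹ * that l := by
      have hlt : c⁻¹ * that l < that kbar :=
        (min_lt_iff.mp (htbar ▸ hg)).resolve_left (lt_irrefl _)
      rw [htbar, min_eq_right hlt.le]
    left
    calc t k ≤ η * that l := greedy_job_time_le hc1 hwl hw hk (ht l) (herr l)
      _ = c * η * tbar kbar := by rw [hround]; field_simp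
  · obtain ⟨hwk, hw⟩ := hnon hg
    have hexact : tbar kbar = that kbar :=
      le_antisymm (htbar ▸ min_le_left _ _) (not_lt.mp hg)
    by_cases hkk : k = kbar
    · subst hkk
      exact .inr ⟨rfl, hexact ▸ herr k⟩
    · left
      calc t k ≤ c * t kbar := nongreedy_job_time_le hc0.le hc1 hwk hw hk (ht kbar) hkk
        _ ≤ c * η * tbar kbar := by
          rw [hexact, mul_assoc]
          exact mul_le_mul_of_nonneg_left (herr kbar) hc0.le

end Job

theorem scheduling_error_bound_general
    (m n : ℕ) (hm : 0 < m) (γ η : ℝ) (hγ1 : 1 ≤ γ) (hγm : γ ≤ m) (hη : 1 ≤ η)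
    (t that : Fin m → Fin n → ℝ) (hthat : ∀ i j, 0 < that i j)
    -- prediction-error bounds
    (herr1 : ∀ i j, t i j ≤ η * that i j) (herr2 : ∀ i j, that i j ≤ η * t i j)
    -- the rounded predicted matrix t̄
    (tbar : Fin m → Fin n → ℝ)
    (htbar : ∀ i j, tbar i j = min (that i j) ((m / γ) * ⨅ i' : Fin m, that i' j))
    -- ā is an optimal allocation for t̄
    (abar : Fin n → Fin m)
    (habar : ∀ a' : Fin n → Fin m, mkspan abar tbar ≤ mkspan a' tbar)
    -- the weight matrix of Algorithm 3
    (w : Fin m → Fin n → ℝ)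
    -- greedy jobs: a machine l attaining the minimum predicted time gets weight γ/m
    (hw_greedy : ∀ j : Fin n, tbar (abar j) j < that (abar j) j →
      ∃ l : Fin m, (∀ i, that l j ≤ that i j) ∧ w l j = γ / m ∧
        ∀ i, i ≠ l → w i j = 1)
    -- non-greedy jobs: machine ā(j) gets weight γ²/m²
    (hw_non : ∀ j : Fin n, ¬ tbar (abar j) j < that (abar j) j →
      w (abar j) j = γ ^ 2 / m ^ 2 ∧ ∀ i, i ≠ abar j → w i j = 1)
    -- under truthful bidding, each job goes to a machine minimizing the
    -- weighted processing time ...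
    (a : Fin n → Fin m)
    (ha_min : ∀ (j : Fin n) (i : Fin m), w (a j) j * t (a j) j ≤ w i j * t i j) :
    mkspan a t ≤ (1 + 2 * γ) * η ^ 2 * optMS t := by
  have : Nonempty (Fin m) := ⟨⟨0, hm⟩⟩
  have hm0 : (0 : ℝ) < m := Nat.cast_pos.mpr hm
  have hη0 : 0 ≤ η := by linarith
  have hratio : 0 < γ / m := div_pos (by linarith) hm0
  have ht : ∀ i j, 0 ≤ t i j := fun i j =>
    nonneg_of_mul_nonneg_right ((hthat i j).le.trans (herr2 i j)) (by linarith)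
  have htbar_le : ∀ i j, tbar i j ≤ that i j := fun i j => (htbar i j).trans_le (min_le_left _ _)
  have htbar0 : ∀ i j, 0 ≤ tbar i j := fun i j => by
    rw [htbar]
    exact le_min (hthat i j).le
      (mul_nonneg (by positivity) (le_ciInf fun i' => (hthat i' j).le))
  have hjob : ∀ j, t (a j) j ≤ γ / m * η * tbar (abar j) j ∨
      (a j = abar j ∧ t (a j) j ≤ η * tbar (abar j) j) := fun j =>
    job_time_le_or (t := (t · j)) (that := (that · j)) (tbar := (tbar · j)) (w := (w · j))
      hratio ((div_le_one hm0).mpr hγm) (ht · j) (herr1 · j)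
      (by rw [htbar, inv_div]) (hw_greedy j) (by rw [div_pow]; exact hw_non j) (ha_min j)
  have hB0 : 0 ≤ mkspan abar tbar := mkspan_nonneg htbar0 abar
  have hBopt : mkspan abar tbar ≤ η * optMS t :=
    mkspan_le_mul_optMS_of_isMin habar hη0 fun i j => (htbar_le i j).trans (herr2 i j)
  calc mkspan a t ≤ (1 + γ / m * m) * η * mkspan abar tbar :=
        mkspan_le_of_job_bounds hratio.le hη0 htbar0 hjob
    _ ≤ (1 + 2 * γ) * η * mkspan abar tbar := by
        rw [div_mul_cancel₀ γ hm0.ne']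
        gcongr
        linarith
    _ ≤ (1 + 2 * γ) * η * (η * optMS t) := by gcongr
    _ = (1 + 2 * γ) * η ^ 2 * optMS t := by ring

/-- Lemma 5.4: under the setup of Algorithm 3 with prediction error `η`,
the allocation produced under truthful bidding has makespan at most
`(1 + 2γ)·η²·MS(t)`. -/
theorem scheduling_error_bound
    (m n : ℕ) (hm : 0 < m) (γ η : ℝ) (hγ1 : 1 ≤ γ) (hγm : γ ≤ m) (hη : 1 ≤ η)
    (t that : Fin m → Fin n → ℝ) (hthat : ∀ i j, 0 < that i j)
    -- prediction-error bounds
    (herr1 : ∀ i j, t i j ≤ η * that i j) (herr2 : ∀ i j, that i j ≤ η * t i j)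
    -- the rounded predicted matrix t̄
    (tbar : Fin m → Fin n → ℝ)
    (htbar : ∀ i j, tbar i j = min (that i j) ((m / γ) * ⨅ i' : Fin m, that i' j))
    -- ā is an optimal allocation for t̄
    (abar : Fin n → Fin m)
    (habar : ∀ a' : Fin n → Fin m, mkspan abar tbar ≤ mkspan a' tbar)
    -- the weight matrix of Algorithm 3
    (w : Fin m → Fin n → ℝ)
    -- greedy jobs: a machine l attaining the minimum predicted time gets weight γ/m
    (hw_greedy : ∀ j : Fin n, tbar (abar j) j < that (abar j) j →
      ∃ l : Fin m, (∀ i, that l j ≤ that i j) ∧ w l j = γ / m ∧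
        ∀ i, i ≠ l → w i j = 1)
    -- non-greedy jobs: machine ā(j) gets weight γ²/m²
    (hw_non : ∀ j : Fin n, ¬ tbar (abar j) j < that (abar j) j →
      w (abar j) j = γ ^ 2 / m ^ 2 ∧ ∀ i, i ≠ abar j → w i j = 1)
    -- under truthful bidding, each job goes to a machine minimizing the
    -- weighted processing time ...
    (a : Fin n → Fin m)
    (ha_min : ∀ (j : Fin n) (i : Fin m), w (a j) j * t (a j) j ≤ w i j * t i j)
    -- ... with ties broken in favor of the machine whose weight is below 1
    (ha_tie : ∀ (j : Fin n) (i : Fin m), w i j < 1 →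
      w i j * t i j ≤ w (a j) j * t (a j) j → a j = i) :
    mkspan a t ≤ (1 + 2 * γ) * η ^ 2 * optMS t :=
  scheduling_error_bound_general m n hm γ η hγ1 hγm hη t that hthat herr1 herr2 tbar htbar abar
    habar w hw_greedy hw_non a ha_min
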